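/- arXiv:2208.03701 — 2 statements merged into one kernel-verified Lean document; each statement's English description precedes it below -/
import Mathlib

section
/- Let φ ∈ AC satisfy conditions (Z1)-(Z4) of the Zachrisson equation with unilateral constraints. Then for all t ∈ [0,T] and i ∈ S: |φ(t,i)| ≤ (M_g + M_h·(T-t))·e^{d·M_Q·(T-t)}, where M_g = sup|g|, M_h = sup|h|, M_Q = sup|Q_{i,j}|. -/
/-!
Let `u t = ‖φ t‖` (sup norm over `S`). From above, (Z2) gives `φ ≤ g ≤ M_g`. From below,
follow a component forward from `t` to its first contact time `σ` with the obstacle `g`, which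
exists since `φ(T) = g(T)`: on `(t, σ)` the constraint is inactive, so (Z3) gives
`φ' ≤ -H ≤ d M_Q u + M_h` almost everywhere, and integrating yields
`φ(t) ≥ g(σ) - ∫_t^T (d M_Q u + M_h) ≥ -M_g - ∫_t^T (d M_Q u + M_h)`. Hence
`u t ≤ M_g + M_h (T - t) + d M_Q ∫_t^T u`, and Grönwall's inequality, run backwards from `T`,
gives the bound.
-/

open Set MeasureTheory

/-- A real function is absolutely continuous on `[0,T]`. -/
def IsAC (T : ℝ) (φ : ℝ → ℝ) : Prop :=
  ∃ f : ℝ → ℝ, MeasureTheory.IntegrableOn f (Set.Icc 0 T) ∧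
    ∀ t ∈ Set.Icc 0 T, φ t = φ 0 + ∫ s in (0:ℝ)..t, f s

open Real

namespace IsAC

variable {T : ℝ} {φ : ℝ → ℝ}

theorem continuousOn (hφ : IsAC T φ) : ContinuousOn φ (Icc 0 T) := by
  obtain ⟨f, hf, hφf⟩ := hφ
  refine (continuousOn_const.add ?_).congr hφf
  rcases le_or_gt 0 T with hT | hT
  · rw [← uIcc_of_le hT] at hf ⊢
    exact intervalIntegral.continuousOn_primitive_interval hf
  · simp [Icc_eq_empty_of_lt hT]

theorem sub_le_integral_of_deriv_le {a b : ℝ} {β : ℝ → ℝ} (hφ : IsAC T φ) (ha : 0 ≤ a)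
    (hab : a ≤ b) (hb : b ≤ T) (hβ : IntervalIntegrable β volume a b)
    (hderiv : ∀ s ∈ Ioo a b, ∀ D, HasDerivAt φ D s → D ≤ β s) :
    φ b - φ a ≤ ∫ s in a..b, β s := by
  obtain ⟨f, hf, hφf⟩ := hφ
  have hsub : ∀ {x y}, x ∈ Icc 0 T → y ∈ Icc 0 T → IntervalIntegrable f volume x y :=
    fun hx hy => (hf.mono_set (uIcc_subset_Icc hx hy)).intervalIntegrable
  have ha' : a ∈ Icc 0 T := ⟨ha, hab.trans hb⟩
  have hb' : b ∈ Icc 0 T := ⟨ha.trans hab, hb⟩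
  have h0 : (0 : ℝ) ∈ Icc 0 T := ⟨le_rfl, ha.trans (hab.trans hb)⟩
  have hdiff : φ b - φ a = ∫ s in a..b, f s := by
    rw [hφf b hb', hφf a ha', add_sub_add_left_eq_sub,
      intervalIntegral.integral_interval_sub_left (hsub h0 hb') (hsub h0 ha')]
  have hae : ∀ᵐ s, s ∈ Ioo a b → HasDerivAt φ (f s) s := by
    filter_upwards [(hsub h0 ⟨h0.2, le_rfl⟩).ae_hasDerivAt_integral] with s hs hsab
    have hs' : s ∈ Ioo 0 T := ⟨ha.trans_lt hsab.1, hsab.2.trans_le hb⟩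
    rw [uIcc_of_le h0.2] at hs
    refine ((hs (Ioo_subset_Icc_self hs') 0 h0).const_add (φ 0)).congr_of_eventuallyEq ?_
    filter_upwards [Icc_mem_nhds hs'.1 hs'.2] with r hr using hφf r hr
  rw [hdiff]
  refine intervalIntegral.integral_mono_ae_restrict hab (hsub ha' hb') hβ ?_
  rw [← Measure.restrict_congr_set Ioo_ae_eq_Icc]
  exact (ae_restrict_iff' measurableSet_Ioo).2
    (hae.mono fun s hs hsab => hderiv s hsab _ (hs hsab))

theorem neg_sub_integral_le_of_deriv_le_off_contact {t M : ℝ} {g β : ℝ → ℝ}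
    (hφ : IsAC T φ) (ht : t ∈ Icc 0 T) (hT : g T ≤ φ T) (hg : ∀ s ∈ Icc t T, -M ≤ g s)
    (hβ : IntervalIntegrable β volume t T) (hβ0 : ∀ s ∈ Icc t T, 0 ≤ β s)
    (hderiv : ∀ s ∈ Ioo t T, φ s < g s → ∀ D, HasDerivAt φ D s → D ≤ β s) :
    -M - ∫ s in t..T, β s ≤ φ t := by
  -- `sInf A` is the first contact time after `t`; before it the constraint is inactive.
  set A := {s ∈ Icc t T | g s ≤ φ s}
  have hTA : T ∈ A := ⟨⟨ht.2, le_rfl⟩, hT⟩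
  have hAbdd : BddBelow A := ⟨t, fun s hs => hs.1.1⟩
  obtain ⟨⟨htσ, hσT⟩, hσ⟩ : sInf A ∈ {s ∈ Icc t T | -M ≤ φ s} := by
    have hclosed : IsClosed (Icc t T ∩ φ ⁻¹' Ici (-M)) :=
      (hφ.continuousOn.mono (Icc_subset_Icc_left ht.1)).preimage_isClosed_of_isClosed
        isClosed_Icc isClosed_Ici
    refine hclosed.closure_subset_iff.2 (fun s hs => ⟨hs.1, (hg s hs.1).trans hs.2⟩)
      (csInf_mem_closure ⟨T, hTA⟩ hAbdd)
  have hsub : φ (sInf A) - φ t ≤ ∫ s in t..sInf A, β s := by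
    refine hφ.sub_le_integral_of_deriv_le ht.1 htσ hσT
      (hβ.mono_set (uIcc_subset_uIcc left_mem_uIcc
        (by simp [uIcc_of_le ht.2, htσ, hσT])))
      fun s hs => hderiv s ⟨hs.1, hs.2.trans_le hσT⟩ (not_le.1 fun hle => ?_)
    exact (csInf_le hAbdd ⟨⟨hs.1.le, hs.2.le.trans hσT⟩, hle⟩).not_gt hs.2
  have hmono : ∫ s in t..sInf A, β s ≤ ∫ s in t..T, β s :=
    intervalIntegral.integral_mono_interval le_rfl htσ hσT
      ((ae_restrict_iff' measurableSet_Ioc).2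
        (ae_of_all _ fun s hs => hβ0 s (Ioc_subset_Icc_self hs))) hβ
  linarith

theorem abs_le_add_integral_of_le_obstacle {M : ℝ} {g β : ℝ → ℝ} (hφ : IsAC T φ)
    (hT : g T ≤ φ T) (hφg : ∀ s ∈ Icc 0 T, φ s ≤ g s) (hg : ∀ s ∈ Icc 0 T, |g s| ≤ M)
    (hβ : IntervalIntegrable β volume 0 T) (hβ0 : ∀ s ∈ Icc 0 T, 0 ≤ β s)
    (hderiv : ∀ s ∈ Ioo 0 T, φ s < g s → ∀ D, HasDerivAt φ D s → D ≤ β s) :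
    ∀ t ∈ Icc 0 T, |φ t| ≤ M + ∫ s in t..T, β s := by
  intro t ht
  have hsub : Icc t T ⊆ Icc 0 T := Icc_subset_Icc_left ht.1
  have hlower := hφ.neg_sub_integral_le_of_deriv_le_off_contact ht hT
    (fun s hs => neg_le_of_abs_le (hg s (hsub hs)))
    (hβ.mono_set (uIcc_subset_uIcc (by simp [uIcc_of_le (ht.1.trans ht.2), ht.1, ht.2])
      right_mem_uIcc))
    (fun s hs => hβ0 s (hsub hs)) (fun s hs => hderiv s (Ioo_subset_Ioo_left ht.1 hs))
  have hint : 0 ≤ ∫ s in t..T, β s :=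
    intervalIntegral.integral_nonneg ht.2 fun s hs => hβ0 s (hsub hs)
  rw [abs_le]
  constructor
  · linarith
  · linarith [hφg t ht, (le_abs_self (g t)).trans (hg t ht)]

end IsAC

theorem mul_gronwallBound_δ0 (K ε x : ℝ) :
    K * gronwallBound 0 K ε x = ε * (exp (K * x) - 1) := by
  rcases eq_or_ne K 0 with rfl | hK
  · simp
  · rw [gronwallBound_of_K_ne_0 hK]
    field_simp
    ring

theorem le_mul_exp_of_le_add_mul_integral {u c : ℝ → ℝ} {a t₀ T : ℝ}
    (hu : ContinuousOn u (Icc t₀ T)) (hc : AntitoneOn c (Icc t₀ T)) (ha : 0 ≤ a)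
    (h : ∀ t ∈ Icc t₀ T, u t ≤ c t + a * ∫ s in t..T, u s) :
    ∀ t ∈ Icc t₀ T, u t ≤ c t * exp (a * (T - t)) := by
  intro t ht
  have hsub : Icc t T ⊆ Icc t₀ T := Icc_subset_Icc_left ht.1
  -- Extending `u` constantly outside `[t, T]` makes the FTC available at every point.
  set v : ℝ → ℝ := fun s => u (projIcc t T ht.2 s)
  have hv : Continuous v :=
    (hu.mono hsub).comp_continuous (continuous_subtype_val.comp continuous_projIcc)
      fun s => (projIcc t T ht.2 s).2
  have hvu : ∀ {x}, x ∈ Icc t T → ∫ s in x..T, v s = ∫ s in x..T, u s := fun hx =>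
    intervalIntegral.integral_congr fun s hs => by
      simp [v, projIcc_of_mem ht.2 (uIcc_subset_Icc hx ⟨ht.2, le_rfl⟩ hs)]
  set W : ℝ → ℝ := fun τ => ∫ s in (T - τ)..T, v s
  have hW : ∀ τ, HasDerivAt W (v (T - τ)) τ := fun τ => by
    have := (intervalIntegral.integral_hasDerivAt_left (hv.intervalIntegrable _ T)
      hv.aestronglyMeasurable.stronglyMeasurableAtFilter hv.continuousAt).comp τ
      ((hasDerivAt_id' τ).const_sub T)
    rw [mul_neg, mul_one, neg_neg] at this
    exact this
  have hgr := le_gronwallBound_of_liminf_deriv_right_le (f := W) (δ := 0) (K := a)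
    (ε := c t) (a := 0) (b := T - t) (fun τ _ => (hW τ).continuousAt.continuousWithinAt)
    (fun τ _ r hr => (hW τ).hasDerivWithinAt.liminf_right_slope_le hr) (by simp [W])
    (fun τ hτ => by
      have hτ' : T - τ ∈ Icc t T := ⟨by linarith [hτ.2], by linarith [hτ.1]⟩
      calc v (T - τ) = u (T - τ) := by simp [v, projIcc_of_mem ht.2 hτ']
        _ ≤ c (T - τ) + a * ∫ s in (T - τ)..T, u s := h _ (hsub hτ')
        _ ≤ a * W τ + c t := by
          rw [← hvu hτ']
          change _ ≤ a * (∫ s in (T - τ)..T, v s) + c t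
          linarith [hc ht (hsub hτ') hτ'.1])
    (T - t) ⟨by linarith [ht.2], le_rfl⟩
  calc u t ≤ c t + a * ∫ s in t..T, u s := h t ht
    _ = c t + a * W (T - t) := by simp [W, hvu ⟨le_rfl, ht.2⟩]
    _ ≤ c t + a * gronwallBound 0 a (c t) (T - t) := by
        gcongr
        simpa using hgr
    _ = c t * exp (a * (T - t)) := by rw [mul_gronwallBound_δ0]; ring

theorem nonneg_of_forall_mul_add_nonneg {K M : ℝ} (h : ∀ x : ℝ, 0 ≤ x → 0 ≤ K * x + M) :
    0 ≤ K ∧ 0 ≤ M := by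
  have hM : 0 ≤ M := by simpa using h 0 le_rfl
  refine ⟨not_lt.1 fun hK => ?_, hM⟩
  have hx := h ((M + 1) / -K) (div_nonneg (by linarith) (by linarith))
  have hKx : K * ((M + 1) / -K) = -(M + 1) := by field_simp [hK.ne]
  linarith

theorem iSup_abs_eq_norm {ι : Type*} [Fintype ι] (w : ι → ℝ) : ⨆ j, |w j| = ‖w‖ :=
  le_antisymm (Real.iSup_le (norm_le_pi_norm w) (norm_nonneg _))
    ((pi_norm_le_iff_of_nonneg (Real.iSup_nonneg fun j => abs_nonneg (w j))).2
      (le_ciSup (f := fun j => |w j|) (Finite.bddAbove_range _)))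

theorem zachrisson_apriori_bound_general {d : ℕ} {T MQ Mh Mg : ℝ}
    (H : Fin d → ℝ → (Fin d → ℝ) → ℝ) (g : ℝ → Fin d → ℝ) (φ : ℝ → Fin d → ℝ)
    (hH : ∀ i t w, |H i t w| ≤ (d : ℝ) * MQ * (⨆ j, |w j|) + Mh)
    (hMg : ∀ t ∈ Icc 0 T, ∀ i, |g t i| ≤ Mg)
    (hAC : ∀ i, IsAC T (fun t => φ t i))
    (hZ1 : ∀ i, φ T i = g T i)
    (hZ2 : ∀ t ∈ Icc 0 T, ∀ i, φ t i ≤ g t i)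
    (hZ3 : ∀ t ∈ Icc 0 T, ∀ i, ∀ D : ℝ, HasDerivAt (fun s => φ s i) D t →
      φ t i < g t i → D ≤ -(H i t (φ t))) :
    ∀ t ∈ Icc 0 T, ∀ i,
      |φ t i| ≤ (Mg + Mh * (T - t)) * Real.exp ((d : ℝ) * MQ * (T - t)) := by
  intro t ht i
  have : Nonempty (Fin d) := ⟨i⟩
  set K := (d : ℝ) * MQ
  simp only [iSup_abs_eq_norm] at hH
  obtain ⟨hK, hMh⟩ : 0 ≤ K ∧ 0 ≤ Mh := nonneg_of_forall_mul_add_nonneg fun x hx => by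
    simpa [pi_norm_const, abs_of_nonneg hx] using (abs_nonneg _).trans (hH i 0 fun _ => x)
  have hu : ContinuousOn (fun s => ‖φ s‖) (Icc 0 T) :=
    (continuousOn_pi.2 fun j => (hAC j).continuousOn).norm
  have hβ : IntervalIntegrable (fun s => K * ‖φ s‖ + Mh) volume 0 T :=
    ((hu.intervalIntegrable_of_Icc (ht.1.trans ht.2)).const_mul K).add
      intervalIntegrable_const
  have hkey : ∀ s ∈ Icc 0 T, ‖φ s‖ ≤ Mg + Mh * (T - s) + K * ∫ r in s..T, ‖φ r‖ := by
    intro s hs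
    have hint :
        ∫ r in s..T, (K * ‖φ r‖ + Mh) = Mh * (T - s) + K * ∫ r in s..T, ‖φ r‖ := by
      rw [intervalIntegral.integral_add
        (((hu.mono (Icc_subset_Icc_left hs.1)).intervalIntegrable_of_Icc hs.2).const_mul K)
        intervalIntegrable_const, intervalIntegral.integral_const_mul,
        intervalIntegral.integral_const, smul_eq_mul]
      ring
    refine (pi_norm_le_iff_of_nonempty _).2 fun j => ?_
    rw [add_assoc, ← hint]
    exact (hAC j).abs_le_add_integral_of_le_obstacle (hZ1 j).ge (fun r hr => hZ2 r hr j)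
      (fun r hr => hMg r hr j) hβ (fun r _ => by positivity)
      (fun r hr hlt D hD => (hZ3 r (Ioo_subset_Icc_self hr) j D hD hlt).trans
        ((neg_le_abs _).trans (hH j r (φ r)))) s hs
  calc |φ t i| ≤ ‖φ t‖ := norm_le_pi_norm (φ t) i
    _ ≤ _ := le_mul_exp_of_le_add_mul_integral hu
      (fun x _ y _ hxy => by gcongr) hK hkey t ht

/-- a priori bound for solutions of the Zachrisson equation with
unilateral constraints: `|φ(t,i)| ≤ (M_g + M_h(T-t))·e^{d·M_Q·(T-t)}`. -/
theorem zachrisson_apriori_bound {d : ℕ} [NeZero d] {T MQ Mh Mg : ℝ} (hT : 0 ≤ T)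
    (H : Fin d → ℝ → (Fin d → ℝ) → ℝ) (g : ℝ → Fin d → ℝ) (φ : ℝ → Fin d → ℝ)
    (hH : ∀ i t w, |H i t w| ≤ (d : ℝ) * MQ * (⨆ j, |w j|) + Mh)
    (hMg : ∀ t ∈ Icc 0 T, ∀ i, |g t i| ≤ Mg)
    (hAC : ∀ i, IsAC T (fun t => φ t i))
    (hZ1 : ∀ i, φ T i = g T i)
    (hZ2 : ∀ t ∈ Icc 0 T, ∀ i, φ t i ≤ g t i)
    (hZ3 : ∀ t ∈ Icc 0 T, ∀ i, ∀ D : ℝ, HasDerivAt (fun s => φ s i) D t →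
      φ t i < g t i → D ≤ -(H i t (φ t)))
    (hZ4 : ∀ t ∈ Icc 0 T, ∀ i, ∀ D : ℝ, HasDerivAt (fun s => φ s i) D t →
      -(H i t (φ t)) ≤ D) :
    ∀ t ∈ Icc 0 T, ∀ i,
      |φ t i| ≤ (Mg + Mh * (T - t)) * Real.exp ((d : ℝ) * MQ * (T - t)) :=
  zachrisson_apriori_bound_general H g φ hH hMg hAC hZ1 hZ2 hZ3
end

section
/- Under assumptions (H1)-(H4) (U, V compact; Q_{i,j}, g(·,i), h(·,i,·,·) continuous; g Lipschitz in t; Isaacs condition min_u max_v = max_v min_u for the Hamiltonian), there exists at least one function φ ∈ AC satisfying the Zachrisson equation with unilateral constraints: (Z1) φ(T,i) = g(T,i); (Z2) φ(t,i) ≤ g(t,i); (Z3) dφ(t,i)/dt ≤ -H_i(t,φ(t)) at points of differentiability where φ(t,i) < g(t,i); (Z4) dφ(t,i)/dt ≥ -H_i(t,φ(t)) at all points of differentiability. -/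
open Set MeasureTheory

/-!
The solution is the value function of an optimal stopping problem whose running cost is the
Hamiltonian evaluated along the solution itself:
`φ(t, i) = min_{s ∈ [t, T]} (g(s, i) + ∫_t^s H_i(r, φ(r)) dr)`.

For a fixed continuous running cost `f`, the value `v(t) = min_{s ∈ [t, T]} (G s + ∫_t^s f)`
satisfies `v t ≤ v s + ∫_t^s f` for `t ≤ s`, which gives (Z4); the inequality is an equality as
long as `v < G` on `[t, s]`, since an optimal stopping time cannot lie there, which gives (Z3).
It is an infimum of uniformly Lipschitz functions of `t`, hence Lipschitz and absolutely
continuous.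

Since `H` is Lipschitz in `w` uniformly in `t`, the map `Θ` sending `ψ` to the value function with
running cost `H(·, ψ(·))` satisfies the Volterra estimate `|Θψ₁ - Θψ₂|(t) ≤ K ∫_t^T |ψ₁ - ψ₂|`;
some iterate of `Θ` is then a contraction of `C([0, T], ℝ^d)`, and its fixed point is the solution.
-/

open Filter Topology Function NNReal

lemma abs_ciInf_sub_ciInf_le {ι : Sort*} [Nonempty ι] {f g : ι → ℝ} {c : ℝ}
    (hf : BddBelow (range f)) (hg : BddBelow (range g)) (h : ∀ i, |f i - g i| ≤ c) :
    |(⨅ i, f i) - ⨅ i, g i| ≤ c := by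
  rw [abs_sub_le_iff]
  constructor
  · exact sub_le_comm.2 <| le_ciInf fun i => by linarith [ciInf_le hf i, (abs_le.1 (h i)).2]
  · exact sub_le_comm.2 <| le_ciInf fun i => by linarith [ciInf_le hg i, (abs_le.1 (h i)).1]

lemma abs_ciSup_sub_ciSup_le {ι : Sort*} [Nonempty ι] {f g : ι → ℝ} {c : ℝ}
    (hf : BddAbove (range f)) (hg : BddAbove (range g)) (h : ∀ i, |f i - g i| ≤ c) :
    |(⨆ i, f i) - ⨆ i, g i| ≤ c := by
  rw [abs_sub_le_iff]
  constructor
  · exact sub_le_iff_le_add.2 <| ciSup_le fun i => by linarith [le_ciSup hg i, (abs_le.1 (h i)).2]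
  · exact sub_le_iff_le_add.2 <| ciSup_le fun i => by linarith [le_ciSup hf i, (abs_le.1 (h i)).1]

lemma LipschitzOnWith.ciInf {α ι : Type*} [PseudoMetricSpace α] [Nonempty ι] {f : ι → α → ℝ}
    {s : Set α} {K : ℝ≥0} (hf : ∀ i, LipschitzOnWith K (f i) s)
    (hb : ∀ x ∈ s, BddBelow (range fun i => f i x)) :
    LipschitzOnWith K (fun x => ⨅ i, f i x) s :=
  LipschitzOnWith.of_dist_le_mul fun x hx y hy =>
    abs_ciInf_sub_ciInf_le (hb x hx) (hb y hy) fun i => (hf i).dist_le_mul x hx y hy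

lemma LipschitzOnWith.congr {α β : Type*} [PseudoEMetricSpace α] [PseudoEMetricSpace β]
    {f g : α → β} {s : Set α} {K : ℝ≥0} (hf : LipschitzOnWith K f s) (h : EqOn f g s) :
    LipschitzOnWith K g s := fun x hx y hy => by
  rw [← h hx, ← h hy]
  exact hf hx hy

lemma isAC_of_lipschitzOnWith {T : ℝ} {φ : ℝ → ℝ} {K : ℝ≥0} (hT : 0 ≤ T)
    (hφ : LipschitzOnWith K φ (Icc 0 T)) : IsAC T φ := by
  have hac : AbsolutelyContinuousOnInterval φ 0 T :=
    LipschitzOnWith.absolutelyContinuousOnInterval (by rwa [uIcc_of_le hT])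
  refine ⟨deriv φ, ?_, fun t ht => ?_⟩
  · exact (intervalIntegrable_iff_integrableOn_Icc_of_le hT).1 hac.intervalIntegrable_deriv
  · rw [(hac.mono (uIcc_subset_uIcc_left (by rwa [uIcc_of_le hT]))).integral_deriv_eq_sub]
    ring

lemma abs_sum_mul_sub_sum_mul_le {ι : Type*} [Fintype ι] (a x y : ι → ℝ) :
    |∑ j, a j * x j - ∑ j, a j * y j| ≤ (∑ j, |a j|) * dist x y := by
  rw [← Finset.sum_sub_distrib, Finset.sum_mul]
  refine (Finset.abs_sum_le_sum_abs _ _).trans (Finset.sum_le_sum fun j _ => ?_)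
  rw [← mul_sub, abs_mul, ← Real.dist_eq]
  exact mul_le_mul_of_nonneg_left (dist_le_pi_dist x y j) (abs_nonneg _)

section minimax

variable {d : ℕ} {U V : Type*} [TopologicalSpace U] [CompactSpace U] [Nonempty U]
  [TopologicalSpace V] [CompactSpace V] [Nonempty V]

lemma abs_iInf_iSup_sub_le {F₁ F₂ : U × V → ℝ} (h₁ : Continuous F₁) (h₂ : Continuous F₂) {c : ℝ}
    (h : ∀ p, |F₁ p - F₂ p| ≤ c) :
    |(⨅ u, ⨆ v, F₁ (u, v)) - ⨅ u, ⨆ v, F₂ (u, v)| ≤ c := by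
  have bddAbove {F : U × V → ℝ} (hF : Continuous F) (u : U) : BddAbove (range fun v => F (u, v)) :=
    (isCompact_range (by fun_prop)).bddAbove
  have bddBelow {F : U × V → ℝ} (hF : Continuous F) : BddBelow (range fun u => ⨆ v, F (u, v)) := by
    obtain ⟨m, hm⟩ := (isCompact_range hF).bddBelow
    refine ⟨m, forall_mem_range.2 fun u => ?_⟩
    exact (hm (mem_range_self (u, Classical.arbitrary V))).trans (le_ciSup (bddAbove hF u) _)
  exact abs_ciInf_sub_ciInf_le (bddBelow h₁) (bddBelow h₂) fun u =>
    abs_ciSup_sub_ciSup_le (bddAbove h₁ u) (bddAbove h₂ u) fun v => h (u, v)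

lemma continuous_iInf_iSup {X : Type*} [TopologicalSpace X] {F : X → U × V → ℝ}
    (hF : Continuous fun p : X × (U × V) => F p.1 p.2) :
    Continuous fun x => ⨅ u, ⨆ v, F x (u, v) := by
  let Φ : C(X × (U × V), ℝ) := ⟨_, hF⟩
  have : LipschitzWith 1 fun G : C(U × V, ℝ) => ⨅ u, ⨆ v, G (u, v) :=
    LipschitzWith.of_dist_le_mul fun G₁ G₂ => by
      rw [NNReal.coe_one, one_mul]
      exact abs_iInf_iSup_sub_le G₁.continuous G₂.continuous fun p =>
        (Real.dist_eq _ _).symm.trans_le (ContinuousMap.dist_apply_le_dist p)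
  exact this.continuous.comp Φ.curry.continuous

lemma continuous_hamiltonian (Q : ℝ → U → V → Fin d → Fin d → ℝ) (h : ℝ → Fin d → U → V → ℝ)
    (hQ : ∀ i j, Continuous fun p : ℝ × U × V => Q p.1 p.2.1 p.2.2 i j)
    (hh : ∀ i, Continuous fun p : ℝ × U × V => h p.1 i p.2.1 p.2.2) (i : Fin d) :
    Continuous fun p : ℝ × (Fin d → ℝ) =>
      ⨅ u : U, ⨆ v : V, (∑ j, Q p.1 u v i j * p.2 j + h p.1 i u v) := by
  have hproj : Continuous fun x : (ℝ × (Fin d → ℝ)) × U × V => (x.1.1, x.2.1, x.2.2) := by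
    fun_prop
  have hF : Continuous fun x : (ℝ × (Fin d → ℝ)) × U × V =>
      ∑ j, Q x.1.1 x.2.1 x.2.2 i j * x.1.2 j + h x.1.1 i x.2.1 x.2.2 :=
    (continuous_finsetSum _ fun j _ => ((hQ i j).comp hproj).mul
      ((continuous_apply j).comp (continuous_snd.comp continuous_fst))).add ((hh i).comp hproj)
  exact continuous_iInf_iSup (F := fun (p : ℝ × (Fin d → ℝ)) (q : U × V) =>
    ∑ j, Q p.1 q.1 q.2 i j * p.2 j + h p.1 i q.1 q.2) hF

lemma exists_lipschitzWith_hamiltonian (Q : ℝ → U → V → Fin d → Fin d → ℝ)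
    (h : ℝ → Fin d → U → V → ℝ)
    (hQ : ∀ i j, Continuous fun p : ℝ × U × V => Q p.1 p.2.1 p.2.2 i j)
    (hh : ∀ i, Continuous fun p : ℝ × U × V => h p.1 i p.2.1 p.2.2) (T : ℝ) :
    ∃ K : ℝ≥0, ∀ t ∈ Icc 0 T, ∀ i, LipschitzWith K fun w : Fin d → ℝ =>
      ⨅ u : U, ⨆ v : V, (∑ j, Q t u v i j * w j + h t i u v) := by
  obtain ⟨C, hC⟩ := ((isCompact_Icc (a := 0) (b := T)).prod (isCompact_univ (X := U × V)))
    |>.exists_bound_of_continuousOn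
      (f := fun p : ℝ × U × V => fun i => ∑ j, |Q p.1 p.2.1 p.2.2 i j|)
    (continuous_pi fun i => continuous_finsetSum _ fun j _ => (hQ i j).abs).continuousOn
  refine ⟨C.toNNReal, fun t ht i => LipschitzWith.of_dist_le_mul fun w w' => ?_⟩
  have hcont (w : Fin d → ℝ) :
      Continuous fun q : U × V => ∑ j, Q t q.1 q.2 i j * w j + h t i q.1 q.2 := by
    have hq : Continuous fun q : U × V => (t, q.1, q.2) := by fun_prop
    exact (continuous_finsetSum _ fun j _ => ((hQ i j).comp hq).mul continuous_const).add
      ((hh i).comp hq)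
  rw [Real.dist_eq]
  refine abs_iInf_iSup_sub_le (hcont w) (hcont w') fun q => ?_
  rw [add_sub_add_right_eq_sub]
  refine (abs_sum_mul_sub_sum_mul_le _ _ _).trans (mul_le_mul_of_nonneg_right ?_ dist_nonneg)
  calc ∑ j, |Q t q.1 q.2 i j|
      ≤ ‖fun i => ∑ j, |Q t q.1 q.2 i j|‖ :=
        (Real.le_norm_self _).trans (norm_le_pi_norm (fun i => ∑ j, |Q t q.1 q.2 i j|) i)
    _ ≤ C := hC (t, q) ⟨ht, mem_univ q⟩
    _ ≤ C.toNNReal := Real.le_coe_toNNReal C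

end minimax

theorem exists_fixedPoint_of_dist_le_integral {E : Type*} [MetricSpace E] [CompleteSpace E]
    [Nonempty E] {a b : ℝ} (hab : a ≤ b) {K : ℝ≥0} (Θ : C(Icc a b, E) → C(Icc a b, E))
    (hΘ : ∀ ψ₁ ψ₂ (β : ℝ → ℝ), Continuous β → (∀ r : Icc a b, dist (ψ₁ r) (ψ₂ r) ≤ β r) →
      ∀ t : Icc a b, dist (Θ ψ₁ t) (Θ ψ₂ t) ≤ K * ∫ r in t..b, β r) :
    ∃ ψ, Θ ψ = ψ := by
  have iterate_le (n : ℕ) : ∀ ψ₁ ψ₂ (t : Icc a b), dist ((Θ^[n] ψ₁) t) ((Θ^[n] ψ₂) t) ≤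
      (K * (b - t)) ^ n / (n.factorial : ℝ) * dist ψ₁ ψ₂ := by
    induction n with
    | zero => intro ψ₁ ψ₂ t; simpa using ContinuousMap.dist_apply_le_dist t
    | succ n ih =>
      intro ψ₁ ψ₂ t
      rw [iterate_succ_apply', iterate_succ_apply']
      refine (hΘ _ _ (fun r => (K * (b - r)) ^ n / n.factorial * dist ψ₁ ψ₂) (by fun_prop)
        (ih ψ₁ ψ₂) t).trans_eq ?_
      have hpoly : (fun r : ℝ => (K * (b - r)) ^ n / (n.factorial : ℝ) * dist ψ₁ ψ₂) =
          fun r => (K ^ n / (n.factorial : ℝ) * dist ψ₁ ψ₂) * (b - r) ^ n := by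
        ext r; rw [mul_pow]; ring
      rw [hpoly, intervalIntegral.integral_const_mul,
        intervalIntegral.integral_comp_sub_left (fun x => x ^ n), sub_self, integral_pow,
        mul_pow, Nat.factorial_succ, zero_pow n.succ_ne_zero]
      push_cast
      field_simp
      ring
  obtain ⟨n, hn⟩ : ∃ n : ℕ, (K * (b - a)) ^ n / (n.factorial : ℝ) < 1 :=
    ((FloorSemiring.tendsto_pow_div_factorial_atTop _).eventually (gt_mem_nhds one_pos)).exists
  have hc : 0 ≤ (K * (b - a)) ^ n / (n.factorial : ℝ) := by have := sub_nonneg.2 hab; positivity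
  have hcontr : ContractingWith (⟨_, hc⟩ : ℝ≥0) (Θ^[n]) := by
    refine ⟨hn, LipschitzWith.of_dist_le_mul fun ψ₁ ψ₂ => ?_⟩
    show _ ≤ (K * (b - a)) ^ n / n.factorial * _
    refine (ContinuousMap.dist_le (by positivity)).2 fun t => (iterate_le n ψ₁ ψ₂ t).trans ?_
    have := sub_nonneg.2 t.2.2
    gcongr
    exact t.2.1
  have : Nonempty C(Icc a b, E) := ⟨.const _ (Classical.arbitrary E)⟩
  exact ⟨_, hcontr.isFixedPt_fixedPoint_iterate⟩

/-- The value of the optimal stopping problem on `[t, T]`: stopping at `s` costs the obstacle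
`G s` plus the running cost `∫ r in t..s, f r`. -/
noncomputable def stopValue (T : ℝ) (G f : ℝ → ℝ) (t : ℝ) : ℝ :=
  ⨅ s : Icc t T, (G s + ∫ r in t..s, f r)

section stopValue

variable {T t s : ℝ} {G f : ℝ → ℝ}

lemma continuous_add_integral (hG : Continuous G) (hf : Continuous f) (t : ℝ) :
    Continuous fun s => G s + ∫ r in t..s, f r :=
  hG.add (intervalIntegral.continuous_primitive (fun _ _ => hf.intervalIntegrable _ _) t)

lemma bddBelow_stopValue (hG : Continuous G) (hf : Continuous f) (t : ℝ) :
    BddBelow (range fun s : Icc t T => G s + ∫ r in t..s, f r) :=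
  (isCompact_range <| (continuous_add_integral hG hf t).comp continuous_subtype_val).bddBelow

lemma stopValue_le (hG : Continuous G) (hf : Continuous f) (hs : s ∈ Icc t T) :
    stopValue T G f t ≤ G s + ∫ r in t..s, f r :=
  ciInf_le (bddBelow_stopValue hG hf t) ⟨s, hs⟩

lemma exists_stopValue_eq (hG : Continuous G) (hf : Continuous f) (ht : t ≤ T) :
    ∃ s ∈ Icc t T, stopValue T G f t = G s + ∫ r in t..s, f r := by
  obtain ⟨s, hs, hmin⟩ := isCompact_Icc.exists_isMinOn (nonempty_Icc.2 ht)
    (continuous_add_integral hG hf t).continuousOn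
  have := (nonempty_Icc.2 ht).to_subtype
  exact ⟨s, hs, (stopValue_le hG hf hs).antisymm (le_ciInf fun σ => hmin σ.2)⟩

lemma stopValue_self (hG : Continuous G) (hf : Continuous f) : stopValue T G f T = G T := by
  obtain ⟨s, hs, h⟩ := exists_stopValue_eq (G := G) (f := f) hG hf le_rfl
  rwa [hs.2.antisymm hs.1, intervalIntegral.integral_same, add_zero] at h

lemma stopValue_le_self (hG : Continuous G) (hf : Continuous f) (ht : t ≤ T) :
    stopValue T G f t ≤ G t := by
  simpa using stopValue_le hG hf ⟨le_rfl, ht⟩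

lemma stopValue_le_stopValue_add_integral (hG : Continuous G) (hf : Continuous f) (hts : t ≤ s)
    (hs : s ≤ T) : stopValue T G f t ≤ stopValue T G f s + ∫ r in t..s, f r := by
  obtain ⟨σ, hσ, hσeq⟩ := exists_stopValue_eq hG hf hs
  calc stopValue T G f t ≤ G σ + ∫ r in t..σ, f r := stopValue_le hG hf ⟨hts.trans hσ.1, hσ.2⟩
    _ = stopValue T G f s + ∫ r in t..s, f r := by
      rw [hσeq, ← intervalIntegral.integral_add_adjacent_intervals (hf.intervalIntegrable t s)
        (hf.intervalIntegrable s σ)]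
      ring

lemma stopValue_add_integral_le (hG : Continuous G) (hf : Continuous f) (hts : t ≤ s)
    (hs : s ≤ T) (hlt : ∀ r ∈ Icc t s, stopValue T G f r < G r) :
    stopValue T G f s + ∫ r in t..s, f r ≤ stopValue T G f t := by
  obtain ⟨σ, hσ, hσeq⟩ := exists_stopValue_eq hG hf (hts.trans hs)
  rcases le_or_gt σ s with hσs | hsσ
  · -- an optimal stopping time in `[t, s]` would put `σ` on the obstacle
    have := stopValue_le_stopValue_add_integral hG hf hσ.1 hσ.2
    linarith [hlt σ ⟨hσ.1, hσs⟩]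
  · calc stopValue T G f s + ∫ r in t..s, f r
        ≤ (G σ + ∫ r in s..σ, f r) + ∫ r in t..s, f r :=
          add_le_add_left (stopValue_le hG hf ⟨hsσ.le, hσ.2⟩) _
      _ = stopValue T G f t := by
        rw [hσeq, ← intervalIntegral.integral_add_adjacent_intervals (hf.intervalIntegrable t s)
          (hf.intervalIntegrable s σ)]
        ring

lemma abs_stopValue_sub_le {f₁ f₂ β : ℝ → ℝ} (hG : Continuous G) (hf₁ : Continuous f₁)
    (hf₂ : Continuous f₂) (hβ : Continuous β) (ht : t ≤ T)
    (h : ∀ r ∈ Icc t T, |f₁ r - f₂ r| ≤ β r) :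
    |stopValue T G f₁ t - stopValue T G f₂ t| ≤ ∫ r in t..T, β r := by
  have := (nonempty_Icc.2 ht).to_subtype
  refine abs_ciInf_sub_ciInf_le (bddBelow_stopValue hG hf₁ t) (bddBelow_stopValue hG hf₂ t)
    fun s => ?_
  rw [add_sub_add_left_eq_sub, ← intervalIntegral.integral_sub (hf₁.intervalIntegrable _ _)
    (hf₂.intervalIntegrable _ _)]
  calc |∫ r in t..s, (f₁ r - f₂ r)| ≤ ∫ r in t..s, |f₁ r - f₂ r| :=
        intervalIntegral.abs_integral_le_integral_abs s.2.1
    _ ≤ ∫ r in t..s, β r :=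
        intervalIntegral.integral_mono_on s.2.1 ((hf₁.sub hf₂).abs.intervalIntegrable _ _)
          (hβ.intervalIntegrable _ _) fun r hr => h r ⟨hr.1, hr.2.trans s.2.2⟩
    _ ≤ ∫ r in t..T, β r :=
        intervalIntegral.integral_mono_interval le_rfl s.2.1 s.2.2
          ((ae_restrict_iff' measurableSet_Ioc).2 (ae_of_all _ fun r hr =>
            (abs_nonneg _).trans (h r (Ioc_subset_Icc_self hr))))
          (hβ.intervalIntegrable _ _)

/-- Reindexing the stopping times by `s ↦ max s t` exhibits `stopValue` as the infimum of a family
of uniformly Lipschitz functions of `t`. -/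
lemma stopValue_eq_iInf_max (ht : t ∈ Icc 0 T) :
    stopValue T G f t = ⨅ s : Icc 0 T, (G (max s t) + ∫ r in t..max s t, f r) := by
  let π : Icc 0 T → Icc t T := fun s => ⟨max s t, le_max_right _ _, max_le s.2.2 ht.2⟩
  have hπ : Surjective π := fun σ =>
    ⟨⟨σ, ht.1.trans σ.2.1, σ.2.2⟩, Subtype.ext (max_eq_left σ.2.1)⟩
  exact (hπ.iInf_comp fun σ : Icc t T => G σ + ∫ r in t..σ, f r).symm

lemma lipschitzOnWith_add_integral_max {L M : ℝ≥0} (hG : LipschitzWith L G) (hf : Continuous f)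
    (hM : ∀ r ∈ Icc 0 T, |f r| ≤ M) (hs : s ∈ Icc 0 T) :
    LipschitzOnWith (L + 2 * M) (fun t => G (max s t) + ∫ r in t..max s t, f r) (Icc 0 T) := by
  have hint {a b : ℝ} (ha : a ∈ Icc 0 T) (hb : b ∈ Icc 0 T) :
      |∫ r in a..b, f r| ≤ M * |b - a| := by
    simpa only [Real.norm_eq_abs] using intervalIntegral.norm_integral_le_of_norm_le_const
      fun r hr => (Real.norm_eq_abs (f r)).trans_le
        (hM r (uIcc_subset_Icc ha hb (uIoc_subset_uIcc hr)))
  have hmem {t : ℝ} (ht : t ∈ Icc 0 T) : max s t ∈ Icc 0 T :=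
    ⟨hs.1.trans (le_max_left _ _), max_le hs.2 ht.2⟩
  refine LipschitzOnWith.of_dist_le_mul fun t₁ h₁ t₂ h₂ => ?_
  set m₁ := max s t₁
  set m₂ := max s t₂
  have hm : |m₁ - m₂| ≤ |t₁ - t₂| := by
    simpa only [m₁, m₂, max_comm s] using abs_max_sub_max_le_abs t₁ t₂ s
  have hsplit : G m₁ + (∫ r in t₁..m₁, f r) - (G m₂ + ∫ r in t₂..m₂, f r) =
      (G m₁ - G m₂) + ((∫ r in t₁..t₂, f r) - ∫ r in m₁..m₂, f r) := by
    rw [add_sub_add_comm, intervalIntegral.integral_interval_sub_interval_comm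
      (hf.intervalIntegrable _ _) (hf.intervalIntegrable _ _) (hf.intervalIntegrable _ _)]
  rw [Real.dist_eq, Real.dist_eq, hsplit]
  calc _ ≤ |G m₁ - G m₂| + (|∫ r in t₁..t₂, f r| + |∫ r in m₁..m₂, f r|) :=
        (abs_add_le _ _).trans (by gcongr; exact abs_sub _ _)
    _ ≤ L * |m₁ - m₂| + (M * |t₂ - t₁| + M * |m₂ - m₁|) := by
        gcongr
        · simpa only [Real.dist_eq] using hG.dist_le_mul m₁ m₂
        · exact hint h₁ h₂
        · exact hint (hmem h₁) (hmem h₂)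
    _ ≤ (L + 2 * M) * |t₁ - t₂| := by
        rw [abs_sub_comm t₂, abs_sub_comm m₂]
        nlinarith [mul_le_mul_of_nonneg_left hm L.2, mul_le_mul_of_nonneg_left hm M.2]

lemma lipschitzOnWith_stopValue {L M : ℝ≥0} (hG : LipschitzWith L G) (hf : Continuous f)
    (hM : ∀ r ∈ Icc 0 T, |f r| ≤ M) :
    LipschitzOnWith (L + 2 * M) (stopValue T G f) (Icc 0 T) := by
  rcases (Icc (0 : ℝ) T).eq_empty_or_nonempty with hempty | hne
  · rw [hempty]
    exact lipschitzOnWith_empty _ _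
  have := hne.to_subtype
  have hbdd (t : ℝ) : BddBelow (range fun s : Icc 0 T => G (max s t) + ∫ r in t..max s t, f r) :=
    (isCompact_range <| (continuous_add_integral hG.continuous hf t).comp
      (continuous_subtype_val.max continuous_const)).bddBelow
  refine (LipschitzOnWith.ciInf (fun s => ?_) fun t _ => hbdd t).congr fun t ht =>
    (stopValue_eq_iInf_max ht).symm
  exact lipschitzOnWith_add_integral_max hG hf hM s.2

lemma exists_lipschitzOnWith_stopValue {L : ℝ≥0} (hG : LipschitzWith L G) (hf : Continuous f) :
    ∃ K : ℝ≥0, LipschitzOnWith K (stopValue T G f) (Icc 0 T) := by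
  obtain ⟨M, hM⟩ := isCompact_Icc.exists_bound_of_continuousOn (hf.continuousOn (s := Icc 0 T))
  exact ⟨_, lipschitzOnWith_stopValue (M := M.toNNReal) hG hf fun r hr =>
    (hM r hr).trans (Real.le_coe_toNNReal M)⟩

lemma continuousOn_stopValue {L : ℝ≥0} (hG : LipschitzWith L G) (hf : Continuous f) :
    ContinuousOn (stopValue T G f) (Icc 0 T) := by
  obtain ⟨K, hK⟩ := exists_lipschitzOnWith_stopValue (T := T) hG hf
  exact hK.continuousOn

end stopValue

/-- The conditions (Z1)–(Z4) on one component `v`, with obstacle `G` and running cost `f`,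
together with absolute continuity. -/
def IsObstacleSolution (T : ℝ) (G f v : ℝ → ℝ) : Prop :=
  IsAC T v ∧ v T = G T ∧ (∀ t ∈ Icc 0 T, v t ≤ G t) ∧
    (∀ t ∈ Icc 0 T, ∀ D : ℝ, HasDerivAt v D t → v t < G t → D ≤ -f t) ∧
    (∀ t ∈ Icc 0 T, ∀ D : ℝ, HasDerivAt v D t → -f t ≤ D)

/-- Off `[0, T]` the values are unconstrained; a kink at `0` makes the derivative conditions
vacuous on the degenerate horizon. -/
lemma isObstacleSolution_zero (G f : ℝ → ℝ) : IsObstacleSolution 0 G f fun t => G 0 + |t| := by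
  have hnd (D : ℝ) : ¬HasDerivAt (fun t => G 0 + |t|) D 0 := fun hD =>
    not_differentiableAt_abs_zero ((differentiableAt_const_add_iff _).1 hD.differentiableAt)
  refine ⟨⟨0, integrableOn_zero, fun t ht => ?_⟩, by simp, fun t ht => ?_,
    fun t ht D hD => ?_, fun t ht D hD => ?_⟩ <;>
  obtain rfl : t = 0 := ht.2.antisymm ht.1
  · simp
  · simp
  · exact (hnd D hD).elim
  · exact (hnd D hD).elim

section derivative

variable {T t D : ℝ} {G f v : ℝ → ℝ}

lemma hasDerivAt_add_integral (hf : Continuous f) (hD : HasDerivAt v D t) :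
    HasDerivAt (fun s => v s + ∫ r in t..s, f r) (D + f t) t :=
  hD.add (hf.integral_hasStrictDerivAt t t).hasDerivAt

lemma slope_add_integral_eq (s : ℝ) :
    slope (fun s => v s + ∫ r in t..s, f r) t s = (v s + (∫ r in t..s, f r) - v t) / (s - t) := by
  rw [slope_def_field, intervalIntegral.integral_same, add_zero]

lemma neg_le_of_hasDerivAt_of_eqOn_stopValue (hT : 0 < T) (hG : Continuous G) (hf : Continuous f)
    (hv : EqOn v (stopValue T G f) (Icc 0 T)) (ht : t ∈ Icc 0 T) (hD : HasDerivAt v D t) :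
    -f t ≤ D := by
  have hslope : ∀ s ∈ Icc 0 T, s ≠ t → 0 ≤ slope (fun s => v s + ∫ r in t..s, f r) t s := by
    intro s hs hst
    rw [slope_add_integral_eq]
    rcases hst.lt_or_gt with hst | hts
    · have := stopValue_le_stopValue_add_integral hG hf hst.le ht.2
      rw [← hv hs, ← hv ht, intervalIntegral.integral_symm t s] at this
      exact div_nonneg_of_nonpos (by linarith) (by linarith)
    · have := stopValue_le_stopValue_add_integral hG hf hts.le hs.2
      rw [← hv hs, ← hv ht] at this
      exact div_nonneg (by linarith) (by linarith)
  have hlim := hasDerivAt_iff_tendsto_slope.1 (hasDerivAt_add_integral hf hD)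
  suffices 0 ≤ D + f t by linarith
  rcases ht.2.lt_or_eq with htT | rfl
  · refine ge_of_tendsto (hlim.mono_left (nhdsGT_le_nhdsNE t)) ?_
    filter_upwards [Ioc_mem_nhdsGT htT] with s hs
    exact hslope s ⟨ht.1.trans hs.1.le, hs.2⟩ hs.1.ne'
  · refine ge_of_tendsto (hlim.mono_left (nhdsLT_le_nhdsNE _)) ?_
    filter_upwards [Ico_mem_nhdsLT hT] with s hs
    exact hslope s ⟨hs.1, hs.2.le⟩ hs.2.ne

lemma le_neg_of_hasDerivAt_of_eqOn_stopValue (hG : Continuous G) (hf : Continuous f)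
    (hv : EqOn v (stopValue T G f) (Icc 0 T)) (ht : t ∈ Icc 0 T) (hD : HasDerivAt v D t)
    (hlt : v t < G t) : D ≤ -f t := by
  have htT : t < T := ht.2.lt_of_ne fun h => by
    subst h; exact hlt.ne (by rw [hv ht, stopValue_self hG hf])
  obtain ⟨l, u, ⟨hl, hu⟩, hsub⟩ := mem_nhds_iff_exists_Ioo_subset.1
    (hD.continuousAt.eventually_lt hG.continuousAt hlt)
  have hlim := hasDerivAt_iff_tendsto_slope.1 (hasDerivAt_add_integral hf hD)
  suffices D + f t ≤ 0 by linarith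
  refine le_of_tendsto (hlim.mono_left (nhdsGT_le_nhdsNE t)) ?_
  filter_upwards [Ioo_mem_nhdsGT (lt_min hu htT)] with s hs
  have hsT : s ∈ Icc 0 T := ⟨ht.1.trans hs.1.le, hs.2.le.trans (min_le_right _ _)⟩
  have hfree : ∀ r ∈ Icc t s, stopValue T G f r < G r := fun r hr => by
    have hr' : r ∈ Icc 0 T := ⟨ht.1.trans hr.1, hr.2.trans hsT.2⟩
    rw [← hv hr']
    exact hsub ⟨hl.trans_le hr.1, hr.2.trans_lt (hs.2.trans_le (min_le_left _ _))⟩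
  have := stopValue_add_integral_le hG hf hs.1.le hsT.2 hfree
  rw [← hv hsT, ← hv ht] at this
  rw [slope_add_integral_eq]
  exact div_nonpos_of_nonpos_of_nonneg (by linarith) (by linarith [hs.1])

end derivative

theorem isObstacleSolution_of_eqOn_stopValue {T : ℝ} (hT : 0 < T) {G f v : ℝ → ℝ} {L : ℝ≥0}
    (hG : LipschitzWith L G) (hf : Continuous f) (hv : EqOn v (stopValue T G f) (Icc 0 T)) :
    IsObstacleSolution T G f v := by
  have hT' : T ∈ Icc 0 T := ⟨hT.le, le_rfl⟩
  obtain ⟨K, hK⟩ := exists_lipschitzOnWith_stopValue (T := T) hG hf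
  refine ⟨isAC_of_lipschitzOnWith hT.le (hK.congr hv.symm),
    (hv hT').trans (stopValue_self hG.continuous hf),
    fun t ht => (hv ht).trans_le (stopValue_le_self hG.continuous hf ht.2),
    fun t ht D hD hlt => le_neg_of_hasDerivAt_of_eqOn_stopValue hG.continuous hf hv ht hD hlt,
    fun t ht D hD => neg_le_of_hasDerivAt_of_eqOn_stopValue hT hG.continuous hf hv ht hD⟩

theorem exists_eqOn_stopValue {d : ℕ} {T : ℝ} (hT : 0 ≤ T) {L K : ℝ≥0} {g : ℝ → Fin d → ℝ}
    (hg : ∀ i, LipschitzWith L fun t => g t i) {H : Fin d → ℝ → (Fin d → ℝ) → ℝ}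
    (hH : ∀ i, Continuous fun p : ℝ × (Fin d → ℝ) => H i p.1 p.2)
    (hHK : ∀ i, ∀ t ∈ Icc 0 T, LipschitzWith K (H i t)) :
    ∃ φ : ℝ → Fin d → ℝ, Continuous φ ∧ ∀ i,
      EqOn (fun t => φ t i) (stopValue T (fun t => g t i) fun r => H i r (φ r)) (Icc 0 T) := by
  have hcost (ψ : C(Icc 0 T, Fin d → ℝ)) (i : Fin d) :
      Continuous fun r => H i r (IccExtend hT ψ r) :=
    (hH i).comp (continuous_id.prodMk ψ.continuous.Icc_extend')
  let Θ (ψ : C(Icc 0 T, Fin d → ℝ)) : C(Icc 0 T, Fin d → ℝ) :=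
    ⟨fun t i => stopValue T (fun t => g t i) (fun r => H i r (IccExtend hT ψ r)) t,
      continuous_pi fun i =>
        (continuousOn_stopValue (hg i) (hcost ψ i)).comp_continuous continuous_subtype_val
          Subtype.prop⟩
  obtain ⟨ψ, hψ⟩ := exists_fixedPoint_of_dist_le_integral hT Θ (K := K)
    fun ψ₁ ψ₂ β hβ hdist t => by
      have hβ₀ : 0 ≤ ∫ r in (t : ℝ)..T, β r := intervalIntegral.integral_nonneg t.2.2
        fun r hr => dist_nonneg.trans (hdist ⟨r, t.2.1.trans hr.1, hr.2⟩)
      refine (dist_pi_le_iff (mul_nonneg K.2 hβ₀)).2 fun i => ?_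
      rw [Real.dist_eq, ← intervalIntegral.integral_const_mul]
      refine abs_stopValue_sub_le (hg i).continuous (hcost ψ₁ i) (hcost ψ₂ i)
        (continuous_const.mul hβ) t.2.2 fun r hr => ?_
      have hr' : r ∈ Icc 0 T := ⟨t.2.1.trans hr.1, hr.2⟩
      rw [← Real.dist_eq, IccExtend_of_mem hT ψ₁ hr', IccExtend_of_mem hT ψ₂ hr']
      exact ((hHK i r hr').dist_le_mul _ _).trans
        (mul_le_mul_of_nonneg_left (hdist ⟨r, hr'⟩) K.2)
  refine ⟨IccExtend hT ψ, ψ.continuous.Icc_extend', fun i t ht => ?_⟩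
  dsimp only
  rw [IccExtend_of_mem hT ψ ht]
  exact (congrFun (DFunLike.congr_fun hψ ⟨t, ht⟩) i).symm

theorem exists_forall_isObstacleSolution {d : ℕ} {T : ℝ} (hT : 0 ≤ T) {L K : ℝ≥0}
    {g : ℝ → Fin d → ℝ} (hg : ∀ i, LipschitzWith L fun t => g t i)
    {H : Fin d → ℝ → (Fin d → ℝ) → ℝ} (hH : ∀ i, Continuous fun p : ℝ × (Fin d → ℝ) => H i p.1 p.2)
    (hHK : ∀ i, ∀ t ∈ Icc 0 T, LipschitzWith K (H i t)) :
    ∃ φ : ℝ → Fin d → ℝ, ∀ i,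
      IsObstacleSolution T (fun t => g t i) (fun r => H i r (φ r)) fun t => φ t i := by
  rcases hT.eq_or_lt with rfl | hT
  · exact ⟨fun t i => g 0 i + |t|, fun i => isObstacleSolution_zero _ _⟩
  obtain ⟨φ, hφ, hφeq⟩ := exists_eqOn_stopValue hT.le hg hH hHK
  exact ⟨φ, fun i => isObstacleSolution_of_eqOn_stopValue hT (hg i)
    ((hH i).comp (continuous_id.prodMk hφ)) (hφeq i)⟩

theorem zachrisson_existence_general {d : ℕ} {T Lg : ℝ} (hT : 0 ≤ T)
    {U V : Type*} [MetricSpace U] [CompactSpace U] [Nonempty U]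
    [MetricSpace V] [CompactSpace V] [Nonempty V]
    (Q : ℝ → U → V → Fin d → Fin d → ℝ) (h : ℝ → Fin d → U → V → ℝ)
    (g : ℝ → Fin d → ℝ)
    -- (H2) continuity
    (hQc : ∀ i j, Continuous fun p : ℝ × U × V => Q p.1 p.2.1 p.2.2 i j)
    (hhc : ∀ i, Continuous fun p : ℝ × U × V => h p.1 i p.2.1 p.2.2)
    -- (H3) g Lipschitz in time
    (hLg : ∀ i, ∀ s r : ℝ, |g s i - g r i| ≤ Lg * |s - r|)
    -- Hamiltonian
    (Ham : Fin d → ℝ → (Fin d → ℝ) → ℝ)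
    (hHamDef : ∀ i t w, Ham i t w =
      ⨅ u : U, ⨆ v : V, (∑ j, Q t u v i j * w j + h t i u v)) :
    ∃ φ : ℝ → Fin d → ℝ,
      (∀ i, IsAC T (fun t => φ t i)) ∧
      (∀ i, φ T i = g T i) ∧
      (∀ t ∈ Icc 0 T, ∀ i, φ t i ≤ g t i) ∧
      (∀ t ∈ Icc 0 T, ∀ i, ∀ D : ℝ, HasDerivAt (fun s => φ s i) D t →
        φ t i < g t i → D ≤ -(Ham i t (φ t))) ∧
      (∀ t ∈ Icc 0 T, ∀ i, ∀ D : ℝ, HasDerivAt (fun s => φ s i) D t →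
        -(Ham i t (φ t)) ≤ D) := by
  obtain rfl : Ham = fun i t w => ⨅ u : U, ⨆ v : V, (∑ j, Q t u v i j * w j + h t i u v) := by
    funext i t w
    exact hHamDef i t w
  have hg : ∀ i, LipschitzWith Lg.toNNReal fun t => g t i := fun i =>
    LipschitzWith.of_dist_le' fun s r => by simpa only [Real.dist_eq] using hLg i s r
  obtain ⟨K, hK⟩ := exists_lipschitzWith_hamiltonian Q h hQc hhc T
  obtain ⟨φ, hφ⟩ := exists_forall_isObstacleSolution hT hg (continuous_hamiltonian Q h hQc hhc)
    fun i t ht => hK t ht i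
  exact ⟨φ, fun i => (hφ i).1, fun i => (hφ i).2.1, fun t ht i => (hφ i).2.2.1 t ht,
    fun t ht i => (hφ i).2.2.2.1 t ht, fun t ht i => (hφ i).2.2.2.2 t ht⟩

/-- existence part of Theorem 2: under (H1)–(H4) there exists a
function `φ ∈ AC` satisfying the Zachrisson equation with unilateral constraints
(Z1)–(Z4). -/
theorem zachrisson_existence {d : ℕ} {T Lg : ℝ} (hT : 0 ≤ T)
    {U V : Type*} [MetricSpace U] [CompactSpace U] [Nonempty U]
    [MetricSpace V] [CompactSpace V] [Nonempty V]
    (Q : ℝ → U → V → Fin d → Fin d → ℝ) (h : ℝ → Fin d → U → V → ℝ)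
    (g : ℝ → Fin d → ℝ)
    -- (H2) continuity
    (hQc : ∀ i j, Continuous fun p : ℝ × U × V => Q p.1 p.2.1 p.2.2 i j)
    (hhc : ∀ i, Continuous fun p : ℝ × U × V => h p.1 i p.2.1 p.2.2)
    (hgc : ∀ i, Continuous fun t => g t i)
    -- Q is a Kolmogorov matrix
    (hQpos : ∀ t u v i j, i ≠ j → 0 ≤ Q t u v i j)
    (hQsum : ∀ t u v i, ∑ j, Q t u v i j = 0)
    -- (H3) g Lipschitz in time
    (hLg : ∀ i, ∀ s r : ℝ, |g s i - g r i| ≤ Lg * |s - r|)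
    -- Hamiltonian
    (Ham : Fin d → ℝ → (Fin d → ℝ) → ℝ)
    (hHamDef : ∀ i t w, Ham i t w =
      ⨅ u : U, ⨆ v : V, (∑ j, Q t u v i j * w j + h t i u v))
    -- (H4) Isaacs condition
    (hIsaacs : ∀ i t (w : Fin d → ℝ),
      (⨅ u : U, ⨆ v : V, (∑ j, Q t u v i j * w j + h t i u v)) =
        (⨆ v : V, ⨅ u : U, (∑ j, Q t u v i j * w j + h t i u v))) :
    ∃ φ : ℝ → Fin d → ℝ,
      (∀ i, IsAC T (fun t => φ t i)) ∧
      (∀ i, φ T i = g T i) ∧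
      (∀ t ∈ Icc 0 T, ∀ i, φ t i ≤ g t i) ∧
      (∀ t ∈ Icc 0 T, ∀ i, ∀ D : ℝ, HasDerivAt (fun s => φ s i) D t →
        φ t i < g t i → D ≤ -(Ham i t (φ t))) ∧
      (∀ t ∈ Icc 0 T, ∀ i, ∀ D : ℝ, HasDerivAt (fun s => φ s i) D t →
        -(Ham i t (φ t)) ≤ D) :=
  zachrisson_existence_general hT Q h g hQc hhc hLg Ham hHamDef
end
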